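/- arXiv:2509.22741 — 4 statements merged into one kernel-verified Lean document; each statement's English description precedes it below -/
import Mathlib

section
/- For all δ ∈ (0,1) and t ∈ (0,1], the inequality (1+δ)(1−e^{−2t}) ≤ (1+2δt)(1−e^{−(2+2δ)t}) holds. -/
/-! Write `a = e^{-2t}` and `b = e^{-(2+2δ)t} = a e^{-2δt}`. Since `1 + 2δt ≤ e^{2δt}`, we have
`(1 + 2δt) b ≤ a`, so the right-hand side is at least `1 + 2δt - a`; that this dominates
`(1 + δ)(1 - a)` amounts to `δ (1 - a) ≤ 2δt`, i.e. `1 - 2t ≤ e^{-2t}`. -/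

open Real

lemma add_one_mul_exp_neg_add_le (x y : ℝ) : (1 + y) * exp (-(x + y)) ≤ exp (-x) :=
  calc (1 + y) * exp (-(x + y)) ≤ exp y * exp (-(x + y)) := by
        gcongr; linarith [add_one_le_exp y]
    _ = exp (-x) := by rw [← exp_add]; ring_nf

theorem exp_ratio_ineq_general (δ t : ℝ) (hδ0 : 0 < δ) :
    (1 + δ) * (1 - Real.exp (-2 * t)) ≤ (1 + 2 * δ * t) * (1 - Real.exp (-(2 + 2 * δ) * t)) := by
  have hdecay : (1 + 2 * δ * t) * exp (-(2 + 2 * δ) * t) ≤ exp (-2 * t) := by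
    convert add_one_mul_exp_neg_add_le (2 * t) (2 * δ * t) using 2 <;> ring_nf
  have hlin : 1 - exp (-2 * t) ≤ 2 * t := by
    linarith [neg_mul 2 t ▸ one_sub_le_exp_neg (2 * t)]
  calc (1 + δ) * (1 - exp (-2 * t)) = (1 - exp (-2 * t)) + δ * (1 - exp (-2 * t)) := by ring
    _ ≤ (1 - exp (-2 * t)) + δ * (2 * t) := by gcongr
    _ ≤ (1 + 2 * δ * t) * (1 - exp (-(2 + 2 * δ) * t)) := by linarith

/-- For all `δ ∈ (0,1)` and `t ∈ (0,1]`,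
`(1+δ)(1−e^{−2t}) ≤ (1+2δt)(1−e^{−(2+2δ)t})`. -/
theorem exp_ratio_ineq (δ t : ℝ) (hδ0 : 0 < δ) (hδ1 : δ < 1) (ht0 : 0 < t) (ht1 : t ≤ 1) :
    (1 + δ) * (1 - Real.exp (-2 * t)) ≤ (1 + 2 * δ * t) * (1 - Real.exp (-(2 + 2 * δ) * t)) :=
  exp_ratio_ineq_general δ t hδ0
end

section
/- Let Γ(t) = (1−e^{−2t})/2 and Γ̄(t) = (1−e^{−(2+2δ)t})/(2+2δ) for δ ∈ (0,1). Then for all t > 0: 0 ≤ Γ(t)/Γ̄(t) − 1 ≤ 2δ·min(1, t). -/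
/-! With `s = 2t`, `a = e^{-s}` and `p = 1 + δ`, the ratio is `p (1 - a) / (1 - a^p)`.
Bernoulli's inequality `1 - a^p ≤ p (1 - a)` gives the lower bound. The ratio exceeds `1` by at most
`δ (1 - a)`: after clearing denominators this is `δ (1 - e^{-s}) ≤ δ s ≤ e^{δ s} - 1`.
Finally `1 - a ≤ min 1 (2t)`. -/

open Real

theorem one_sub_exp_neg_le (s : ℝ) : 1 - exp (-s) ≤ s := by
  linarith [add_one_le_exp (-s)]

theorem one_sub_exp_neg_mul_le {p : ℝ} (hp : 1 ≤ p) (s : ℝ) :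
    1 - exp (-(p * s)) ≤ p * (1 - exp (-s)) := by
  have hbern := one_add_mul_self_le_rpow_one_add (s := exp (-s) - 1)
    (by linarith [exp_pos (-s)]) hp
  rw [add_sub_cancel, ← exp_mul] at hbern
  rw [show -(p * s) = -s * p by ring]
  linarith

theorem mul_one_sub_exp_neg_le {δ : ℝ} (hδ : 0 ≤ δ) (s : ℝ) :
    δ * (1 - exp (-s)) ≤ exp (δ * s) - 1 :=
  calc δ * (1 - exp (-s)) ≤ δ * s := mul_le_mul_of_nonneg_left (one_sub_exp_neg_le s) hδ
    _ ≤ exp (δ * s) - 1 := by linarith [add_one_le_exp (δ * s)]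

section VarianceRatio

variable {δ s : ℝ}

theorem one_le_mul_one_sub_exp_neg_div (hδ : 0 ≤ δ) (hs : 0 < s) :
    1 ≤ (1 + δ) * (1 - exp (-s)) / (1 - exp (-((1 + δ) * s))) := by
  have hden : 0 < 1 - exp (-((1 + δ) * s)) := by
    rw [sub_pos, exp_lt_one_iff, neg_neg_iff_pos]; positivity
  rw [one_le_div hden]
  exact one_sub_exp_neg_mul_le (by linarith) s

theorem mul_one_sub_exp_neg_div_le (hδ : 0 ≤ δ) (hs : 0 < s) :
    (1 + δ) * (1 - exp (-s)) / (1 - exp (-((1 + δ) * s))) ≤ 1 + δ * (1 - exp (-s)) := by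
  set a := exp (-s)
  set e := exp (δ * s)
  have ha : 0 < a := exp_pos _
  have he : 0 < e := exp_pos _
  have ha1 : a < 1 := by rw [exp_lt_one_iff, neg_neg_iff_pos]; exact hs
  have he1 : 1 ≤ e := one_le_exp (by positivity)
  have hsplit : exp (-((1 + δ) * s)) = a / e := by
    rw [← exp_sub]; ring_nf
  have hkey := mul_one_sub_exp_neg_le hδ s
  rw [hsplit, div_le_iff₀ (by rw [sub_pos, div_lt_one he]; linarith), one_sub_div he.ne']
  rw [mul_div_assoc', le_div_iff₀ he]
  -- the difference of the two sides is `a (e - 1 - δ (1 - a))`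
  nlinarith [mul_nonneg ha.le (sub_nonneg.mpr hkey)]

end VarianceRatio

theorem gamma_ratio_bound_general (δ t : ℝ) (hδ0 : 0 < δ) (ht : 0 < t) :
    0 ≤ (1 - Real.exp (-2 * t)) / 2 / ((1 - Real.exp (-(2 + 2 * δ) * t)) / (2 + 2 * δ)) - 1 ∧
    (1 - Real.exp (-2 * t)) / 2 / ((1 - Real.exp (-(2 + 2 * δ) * t)) / (2 + 2 * δ)) - 1
      ≤ 2 * δ * min 1 t := by
  have hratio : (1 - exp (-2 * t)) / 2 / ((1 - exp (-(2 + 2 * δ) * t)) / (2 + 2 * δ))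
      = (1 + δ) * (1 - exp (-(2 * t))) / (1 - exp (-((1 + δ) * (2 * t)))) := by
    rw [show -2 * t = -(2 * t) by ring, show -(2 + 2 * δ) * t = -((1 + δ) * (2 * t)) by ring,
      div_div_eq_mul_div]
    ring
  have hs : 0 < 2 * t := by positivity
  have hgap : 1 - exp (-(2 * t)) ≤ 2 * min 1 t := by
    rw [mul_min_of_nonneg _ _ zero_le_two]
    exact le_min (by linarith [exp_pos (-(2 * t))]) (by simpa using one_sub_exp_neg_le (2 * t))
  rw [hratio]
  constructor
  · linarith [one_le_mul_one_sub_exp_neg_div hδ0.le hs]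
  · calc _ ≤ δ * (1 - exp (-(2 * t))) := by linarith [mul_one_sub_exp_neg_div_le hδ0.le hs]
      _ ≤ δ * (2 * min 1 t) := mul_le_mul_of_nonneg_left hgap hδ0.le
      _ = 2 * δ * min 1 t := by ring

/-- For `δ ∈ (0,1)`, `t > 0`, with `Γ(t) = (1−e^{−2t})/2` and
`Γ̄(t) = (1−e^{−(2+2δ)t})/(2+2δ)`, one has `0 ≤ Γ(t)/Γ̄(t) − 1 ≤ 2δ·min(1,t)`. -/
theorem gamma_ratio_bound (δ t : ℝ) (hδ0 : 0 < δ) (hδ1 : δ < 1) (ht : 0 < t) :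
    0 ≤ (1 - Real.exp (-2 * t)) / 2 / ((1 - Real.exp (-(2 + 2 * δ) * t)) / (2 + 2 * δ)) - 1 ∧
    (1 - Real.exp (-2 * t)) / 2 / ((1 - Real.exp (-(2 + 2 * δ) * t)) / (2 + 2 * δ)) - 1
      ≤ 2 * δ * min 1 t :=
  gamma_ratio_bound_general δ t hδ0 ht
end

section
/- Let h > 0 and A ∈ ℝ^{d×d} with ‖A‖h ≤ 1/15. Define A_h = ∫₀^h e^{At} dt. Then ‖A_h − hI‖ ≤ ∫₀^h (e^{‖A‖t} − 1) dt ≤ h/20, and A_h is invertible with ‖A_h^{−1}‖ ≤ (20/19)/h. -/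
open NormedSpace

/-!
Termwise on the exponential series, `‖e^{tA} - 1‖ ≤ e^{‖A‖t} - 1`; integrating over `[0, h]` gives
the first bound. With `e^s - 1 ≤ s + s²` on `[0, 1]` the scalar integral is at most
`h (x/2 + x²/3) ≤ h/20`, where `x = ‖A‖h ≤ 1/15`. So `A_h = h (1 - T)` with `‖T‖ ≤ 1/20`, and the
Neumann series inverts `1 - T` with `‖(1 - T)⁻¹‖ ≤ (1 - ‖T‖)⁻¹ ≤ 20/19`.
-/

section ExpSubOne

variable {𝔸 : Type*} [NormedRing 𝔸] [NormedAlgebra ℝ 𝔸] [CompleteSpace 𝔸]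

theorem hasSum_exp_sub_one (x : 𝔸) :
    HasSum (fun n : ℕ => ((n + 1).factorial⁻¹ : ℝ) • x ^ (n + 1)) (exp x - 1) := by
  rw [exp_eq_tsum ℝ]
  simpa using (hasSum_nat_add_iff' 1).mpr (expSeries_summable' (𝕂 := ℝ) x).hasSum

theorem norm_exp_sub_one_le (x : 𝔸) : ‖exp x - 1‖ ≤ Real.exp ‖x‖ - 1 := by
  rw [← (hasSum_exp_sub_one x).tsum_eq]
  refine tsum_of_norm_bounded (Real.exp_eq_exp_ℝ ▸ hasSum_exp_sub_one ‖x‖) fun n => ?_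
  rw [norm_smul, Real.norm_of_nonneg (by positivity), smul_eq_mul]
  gcongr
  exact norm_pow_le' x n.succ_pos

theorem continuous_exp_smul (A : 𝔸) : Continuous fun t : ℝ => exp (t • A) :=
  continuous_iff_continuousAt.2 fun t =>
    (exp_analytic (𝕂 := ℝ) (t • A)).continuousAt.comp (f := fun s : ℝ => s • A) (by fun_prop)

theorem norm_integral_exp_smul_sub_smul_one_le (A : 𝔸) {h : ℝ} (hh : 0 ≤ h) :
    ‖(∫ t in (0:ℝ)..h, exp (t • A)) - h • (1 : 𝔸)‖ ≤
      ∫ t in (0:ℝ)..h, (Real.exp (‖A‖ * t) - 1) := by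
  have hint : IntervalIntegrable (fun t : ℝ => exp (t • A) - 1) MeasureTheory.volume 0 h :=
    ((continuous_exp_smul A).sub continuous_const).intervalIntegrable 0 h
  calc ‖(∫ t in (0:ℝ)..h, exp (t • A)) - h • (1 : 𝔸)‖
      = ‖∫ t in (0:ℝ)..h, (exp (t • A) - 1)‖ := by
        rw [intervalIntegral.integral_sub ((continuous_exp_smul A).intervalIntegrable 0 h)
          intervalIntegrable_const, intervalIntegral.integral_const, sub_zero]
    _ ≤ ∫ t in (0:ℝ)..h, ‖exp (t • A) - 1‖ := intervalIntegral.norm_integral_le_integral_norm hh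
    _ ≤ ∫ t in (0:ℝ)..h, (Real.exp (‖A‖ * t) - 1) := by
        refine intervalIntegral.integral_mono_on hh hint.norm
          (by apply Continuous.intervalIntegrable; fun_prop) fun t ht => ?_
        simpa [norm_smul, abs_of_nonneg ht.1, mul_comm] using norm_exp_sub_one_le (t • A)

end ExpSubOne

theorem integral_exp_mul_sub_one_le {a h : ℝ} (ha : 0 ≤ a) (hh : 0 ≤ h) (hah : a * h ≤ 1) :
    ∫ t in (0:ℝ)..h, (Real.exp (a * t) - 1) ≤ a * h ^ 2 / 2 + a ^ 2 * h ^ 3 / 3 := by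
  calc ∫ t in (0:ℝ)..h, (Real.exp (a * t) - 1)
      ≤ ∫ t in (0:ℝ)..h, (a * t + a ^ 2 * t ^ 2) := by
        refine intervalIntegral.integral_mono_on hh (by apply Continuous.intervalIntegrable; fun_prop)
          (by apply Continuous.intervalIntegrable; fun_prop) fun t ht => ?_
        have hat : 0 ≤ a * t := mul_nonneg ha ht.1
        have hat1 : a * t ≤ 1 := (mul_le_mul_of_nonneg_left ht.2 ha).trans hah
        have := (abs_le.mp (Real.abs_exp_sub_one_sub_id_le (abs_le.mpr ⟨by linarith, hat1⟩))).2
        linarith [mul_pow a t 2]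
    _ = a * h ^ 2 / 2 + a ^ 2 * h ^ 3 / 3 := by
        rw [intervalIntegral.integral_add (by apply Continuous.intervalIntegrable; fun_prop)
          (by apply Continuous.intervalIntegrable; fun_prop), intervalIntegral.integral_const_mul,
          intervalIntegral.integral_const_mul, integral_id, integral_pow]
        ring

section NearOne

variable {R : Type*} [NormedRing R] [HasSummableGeomSeries R]

-- `‖1‖ ≤ 1` rather than `[NormOneClass R]`: operators on the zero space have `‖1‖ = 0`.
theorem norm_inv_units_oneSub_le (h1 : ‖(1 : R)‖ ≤ 1) (t : R) (ht : ‖t‖ < 1) :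
    ‖(↑(Units.oneSub t ht)⁻¹ : R)‖ ≤ (1 - ‖t‖)⁻¹ :=
  (tsum_geometric_le_of_norm_lt_one t ht).trans (by linarith)

theorem exists_inverse_of_norm_sub_smul_one_le {𝕜 : Type*} [NormedField 𝕜] [NormedAlgebra 𝕜 R]
    (h1 : ‖(1 : R)‖ ≤ 1) {x : R} {c : 𝕜} {ε : ℝ} (hc : c ≠ 0) (hε : ε < 1)
    (hx : ‖x - c • 1‖ ≤ ε * ‖c‖) :
    ∃ B : R, x * B = 1 ∧ B * x = 1 ∧ ‖B‖ ≤ (1 - ε)⁻¹ / ‖c‖ := by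
  set t : R := 1 - c⁻¹ • x
  have hc' : 0 < ‖c‖ := norm_pos_iff.mpr hc
  have htε : ‖t‖ ≤ ε := by
    have : t = -(c⁻¹ • (x - c • 1)) := by
      rw [smul_sub, smul_smul, inv_mul_cancel₀ hc, one_smul, neg_sub]
    rwa [this, norm_neg, norm_smul, norm_inv, inv_mul_le_iff₀ hc', mul_comm]
  have ht : ‖t‖ < 1 := htε.trans_lt hε
  set u := Units.oneSub t ht
  have hx_eq : x = c • (u : R) := by
    rw [Units.val_oneSub, sub_sub_cancel, smul_smul, mul_inv_cancel₀ hc, one_smul]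
  refine ⟨c⁻¹ • ↑u⁻¹, ?_, ?_, ?_⟩
  · rw [hx_eq, smul_mul_smul_comm, mul_inv_cancel₀ hc, u.mul_inv, one_smul]
  · rw [hx_eq, smul_mul_smul_comm, inv_mul_cancel₀ hc, u.inv_mul, one_smul]
  · rw [norm_smul, norm_inv, inv_mul_eq_div]
    gcongr
    exact (norm_inv_units_oneSub_le h1 t ht).trans (by gcongr)

end NearOne

/-- Let `h > 0` and `A` with `‖A‖h ≤ 1/15`. With `A_h = ∫₀^h e^{At} dt`, we have
`‖A_h − hI‖ ≤ ∫₀^h (e^{‖A‖t} − 1) dt ≤ h/20`, and `A_h` is invertible with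
`‖A_h⁻¹‖ ≤ (20/19)/h`. -/
theorem integral_exp_invertible (d : ℕ)
    (A : EuclideanSpace ℝ (Fin d) →L[ℝ] EuclideanSpace ℝ (Fin d)) (h : ℝ)
    (hh : 0 < h) (hA : ‖A‖ * h ≤ 1/15) :
    ‖(∫ t in (0:ℝ)..h, exp (t • A)) - h • (1 : EuclideanSpace ℝ (Fin d) →L[ℝ]
        EuclideanSpace ℝ (Fin d))‖ ≤ ∫ t in (0:ℝ)..h, (Real.exp (‖A‖ * t) - 1) ∧
    (∫ t in (0:ℝ)..h, (Real.exp (‖A‖ * t) - 1)) ≤ h / 20 ∧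
    ∃ B : EuclideanSpace ℝ (Fin d) →L[ℝ] EuclideanSpace ℝ (Fin d),
      (∫ t in (0:ℝ)..h, exp (t • A)) * B = 1 ∧ B * (∫ t in (0:ℝ)..h, exp (t • A)) = 1 ∧
      ‖B‖ ≤ (20/19) / h := by
  have hdist := norm_integral_exp_smul_sub_smul_one_le A hh.le
  have hint : ∫ t in (0:ℝ)..h, (Real.exp (‖A‖ * t) - 1) ≤ h / 20 := by
    have hx : 0 ≤ ‖A‖ * h := mul_nonneg (norm_nonneg A) hh.le
    calc ∫ t in (0:ℝ)..h, (Real.exp (‖A‖ * t) - 1)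
        ≤ ‖A‖ * h ^ 2 / 2 + ‖A‖ ^ 2 * h ^ 3 / 3 :=
          integral_exp_mul_sub_one_le (norm_nonneg A) hh.le (by linarith)
      _ = h * ((‖A‖ * h) / 2 + (‖A‖ * h) ^ 2 / 3) := by ring
      _ ≤ h * (1 / 20) := by gcongr; nlinarith
      _ = h / 20 := by ring
  obtain ⟨B, hAB, hBA, hB⟩ := exists_inverse_of_norm_sub_smul_one_le
    ContinuousLinearMap.norm_id_le hh.ne' (by norm_num : (1 / 20 : ℝ) < 1)
    (hdist.trans (hint.trans_eq (by rw [Real.norm_of_nonneg hh.le]; ring)))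
  refine ⟨hdist, hint, B, hAB, hBA, hB.trans_eq ?_⟩
  rw [Real.norm_of_nonneg hh.le]
  norm_num
end

section
/- Let g and ḡ be two probability densities on a measurable space, let E be a measurable set with ∫_E g ≥ 1/2 and ḡ(x) ≥ e^{−3} g(x) for all x ∈ E, and let A, Ā be two real numbers with |A − Ā| = 1/(5√T). Then for any measurable estimator φ, max{ P_{X∼g}(|φ(X) − A| ≥ 1/(10√T)), P_{X∼ḡ}(|φ(X) − Ā| ≥ 1/(10√T)) } ≥ 1/(4e³). -/
open MeasureTheory

lemma le_dist_or_le_dist_of_two_mul_le_dist {X : Type*} [PseudoMetricSpace X] {a b : X} {ε : ℝ}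
    (h : 2 * ε ≤ dist a b) (y : X) : ε ≤ dist y a ∨ ε ≤ dist y b := by
  by_contra! hy
  linarith [dist_triangle_left a b y]

section SetIntegral

variable {Ω : Type*} [MeasurableSpace Ω] {ν : Measure Ω} {f g : Ω → ℝ} {s t E : Set Ω}

lemma setIntegral_le_add_setIntegral_inter_of_subset_union (hf0 : ∀ x, 0 ≤ f x)
    (hf : Integrable f ν) (hs : MeasurableSet s) (hE : E ⊆ s ∪ t) :
    ∫ x in E, f x ∂ν ≤ ∫ x in s, f x ∂ν + ∫ x in E ∩ t, f x ∂ν := by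
  rw [← integral_inter_add_sdiff hs hf.integrableOn]
  have hdiff : E \ s ⊆ E ∩ t := fun x hx => ⟨hx.1, (hE hx.1).resolve_left hx.2⟩
  exact add_le_add
    (setIntegral_mono_set hf.integrableOn (.of_forall hf0) Set.inter_subset_right.eventuallyLE)
    (setIntegral_mono_set hf.integrableOn (.of_forall hf0) hdiff.eventuallyLE)

lemma const_mul_setIntegral_le_of_forall_mem (hf : Integrable f ν) (hg : Integrable g ν)
    (hs : MeasurableSet s) {c : ℝ} (h : ∀ x ∈ s, c * f x ≤ g x) :
    c * ∫ x in s, f x ∂ν ≤ ∫ x in s, g x ∂ν := by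
  rw [← integral_const_mul]
  exact setIntegral_mono_on (hf.const_mul c).integrableOn hg.integrableOn hs h

/-- Le Cam's two-point argument: whichever of `s`, `t` carries half of the `f`-mass of `E`
has a large integral, of `f` directly or of `g` through the density-ratio bound on `E`. -/
lemma const_mul_setIntegral_le_two_mul_max_of_subset_union (hf0 : ∀ x, 0 ≤ f x)
    (hg0 : ∀ x, 0 ≤ g x) (hf : Integrable f ν) (hg : Integrable g ν) (hE : MeasurableSet E)
    (hs : MeasurableSet s) (ht : MeasurableSet t) (hcover : E ⊆ s ∪ t) {c : ℝ} (hc0 : 0 ≤ c)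
    (hc1 : c ≤ 1) (hratio : ∀ x ∈ E, c * f x ≤ g x) :
    c * ∫ x in E, f x ∂ν ≤ 2 * max (∫ x in s, f x ∂ν) (∫ x in t, g x ∂ν) := by
  have hsplit := setIntegral_le_add_setIntegral_inter_of_subset_union hf0 hf hs hcover
  have hfs : 0 ≤ ∫ x in s, f x ∂ν := setIntegral_nonneg hs fun x _ => hf0 x
  have hEt : c * ∫ x in E ∩ t, f x ∂ν ≤ ∫ x in t, g x ∂ν :=
    (const_mul_setIntegral_le_of_forall_mem hf hg (hE.inter ht) fun x hx => hratio x hx.1).trans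
      (setIntegral_mono_set hg.integrableOn (.of_forall hg0) Set.inter_subset_right.eventuallyLE)
  calc c * ∫ x in E, f x ∂ν
      ≤ c * ∫ x in s, f x ∂ν + c * ∫ x in E ∩ t, f x ∂ν := by
        rw [← mul_add]; exact mul_le_mul_of_nonneg_left hsplit hc0
    _ ≤ ∫ x in s, f x ∂ν + ∫ x in t, g x ∂ν :=
        add_le_add (mul_le_of_le_one_left hfs hc1) hEt
    _ ≤ 2 * max (∫ x in s, f x ∂ν) (∫ x in t, g x ∂ν) := by
        linarith [le_max_left (∫ x in s, f x ∂ν) (∫ x in t, g x ∂ν),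
          le_max_right (∫ x in s, f x ∂ν) (∫ x in t, g x ∂ν)]

end SetIntegral

theorem estimation_lower_bound_general {Ω : Type*} [MeasurableSpace Ω] (ν : Measure Ω)
    (g gb : Ω → ℝ) (hg0 : ∀ x, 0 ≤ g x) (hgb0 : ∀ x, 0 ≤ gb x)
    (hgint : Integrable g ν) (hgbint : Integrable gb ν)
    (E : Set Ω) (hE : MeasurableSet E)
    (hEg : 1/2 ≤ ∫ x in E, g x ∂ν)
    (hratio : ∀ x ∈ E, Real.exp (-3) * g x ≤ gb x)
    (T : ℝ) (A Ab : ℝ) (hAAb : |A - Ab| = 1 / (5 * Real.sqrt T))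
    (φ : Ω → ℝ) (hφ : Measurable φ) :
    1 / (4 * Real.exp 3) ≤
      max (∫ x in {x | 1 / (10 * Real.sqrt T) ≤ |φ x - A|}, g x ∂ν)
          (∫ x in {x | 1 / (10 * Real.sqrt T) ≤ |φ x - Ab|}, gb x ∂ν) := by
  set ε := 1 / (10 * Real.sqrt T)
  have hmeas (a : ℝ) : MeasurableSet {x | ε ≤ |φ x - a|} :=
    measurableSet_le measurable_const (hφ.sub measurable_const).abs
  have hcover : E ⊆ {x | ε ≤ |φ x - A|} ∪ {x | ε ≤ |φ x - Ab|} := fun x _ => by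
    simpa only [Real.dist_eq, Set.mem_union, Set.mem_ofPred_eq] using
      le_dist_or_le_dist_of_two_mul_le_dist
        (by rw [Real.dist_eq, hAAb]; exact le_of_eq (by ring)) (φ x)
  have key := const_mul_setIntegral_le_two_mul_max_of_subset_union hg0 hgb0 hgint hgbint hE
    (hmeas A) (hmeas Ab) hcover (Real.exp_nonneg _) (Real.exp_le_one_iff.mpr (by norm_num)) hratio
  calc 1 / (4 * Real.exp 3) = Real.exp (-3) * (1 / 2) / 2 := by
        rw [Real.exp_neg]; field_simp; ring
    _ ≤ Real.exp (-3) * (∫ x in E, g x ∂ν) / 2 := by gcongr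
    _ ≤ _ := by linarith

/-- Two-point lower bound: if `g, ḡ` are densities, `E` a measurable set with
`∫_E g ≥ 1/2` and `ḡ ≥ e^{−3} g` on `E`, and `|A − Ā| = 1/(5√T)`, then for any
measurable estimator `φ`,
`max{ P_{X∼g}(|φ(X) − A| ≥ 1/(10√T)), P_{X∼ḡ}(|φ(X) − Ā| ≥ 1/(10√T)) } ≥ 1/(4e³)`. -/
theorem estimation_lower_bound {Ω : Type*} [MeasurableSpace Ω] (ν : Measure Ω)
    (g gb : Ω → ℝ) (hg0 : ∀ x, 0 ≤ g x) (hgb0 : ∀ x, 0 ≤ gb x)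
    (hgmeas : Measurable g) (hgbmeas : Measurable gb)
    (hgint : Integrable g ν) (hgbint : Integrable gb ν)
    (E : Set Ω) (hE : MeasurableSet E)
    (hEg : 1/2 ≤ ∫ x in E, g x ∂ν)
    (hratio : ∀ x ∈ E, Real.exp (-3) * g x ≤ gb x)
    (T : ℝ) (hT : 0 < T) (A Ab : ℝ) (hAAb : |A - Ab| = 1 / (5 * Real.sqrt T))
    (φ : Ω → ℝ) (hφ : Measurable φ) :
    1 / (4 * Real.exp 3) ≤
      max (∫ x in {x | 1 / (10 * Real.sqrt T) ≤ |φ x - A|}, g x ∂ν)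
          (∫ x in {x | 1 / (10 * Real.sqrt T) ≤ |φ x - Ab|}, gb x ∂ν) :=
  estimation_lower_bound_general ν g gb hg0 hgb0 hgint hgbint E hE hEg hratio T A Ab hAAb φ hφ
end
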